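/- Let r be odd and G' a leaf-expansion of the r-graph G at a leaf l of its spanning tree T, introducing the vertex set V(K) of a copy of K_r. If S ⊆ V(G) is an even-cardinality set with l ∈ S and |∂_G(S)| = 2, then S' = (S \ {l}) ∪ V(K) has even cardinality and |∂_{G'}(S')| = 2, and the 2-cut reduction of S in G yields the same graph as the 2-cut reduction of S' in G'. -/

import Mathlib

open Finset

structure Multigraph (V : Type) where
  mult : Sym2 V → ℕ
  loopless : ∀ v : V, mult s(v, v) = 0

namespace Multigraph

variable {V : Type} [Fintype V] [DecidableEq V]

def degree (G : Multigraph V) (v : V) : ℕ := ∑ u, G.mult s(v, u)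

def IsRegular (G : Multigraph V) (r : ℕ) : Prop := ∀ v, G.degree v = r

def cutsize (G : Multigraph V) (S : Finset V) : ℕ :=
  ∑ x ∈ S, ∑ y ∈ Sᶜ, G.mult s(x, y)

def IsRGraph (G : Multigraph V) (r : ℕ) : Prop :=
  G.IsRegular r ∧ ∀ S : Finset V, Odd S.card → r ≤ G.cutsize S

def reduce (G : Multigraph V) (S : Finset V) {u v : V} (huv : u ≠ v) :
    Multigraph {x : V // x ∉ S} where
  mult p := G.mult (p.map Subtype.val) + (if p.map Subtype.val = s(u, v) then 1 else 0)
  loopless a := by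
    simp only [Sym2.map_pair_eq, G.loopless]
    rw [if_neg (fun h => by
      rcases Sym2.eq_iff.mp h with ⟨rfl, rfl⟩ | ⟨rfl, rfl⟩ <;> exact huv rfl)]

def IsPerfectMatching (G : Multigraph V) (M : Sym2 V → ℕ) : Prop :=
  (∀ p, M p ≤ G.mult p) ∧ ∀ v, ∑ u, M s(v, u) = 1

def degIn (T : Sym2 V → ℕ) (v : V) : ℕ := ∑ u, T s(v, u)

def IsSpanningTree (G : Multigraph V) (T : Sym2 V → ℕ) : Prop :=
  (∀ p, T p ≤ G.mult p) ∧ (∑ p : Sym2 V, T p) + 1 = Fintype.card V ∧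
    ∀ u v : V, Relation.ReflTransGen (fun a b => T s(a, b) ≠ 0) u v

end Multigraph

open Multigraph


variable {V : Type} [Fintype V] [DecidableEq V]

/-- The leaf-expansion of `G` at a vertex `l`: delete `l`, add a copy of the
complete graph `K_r` on new vertices `Sum.inr 0, …, Sum.inr (r-1)`, and join the
`i`-th new vertex to the former neighbour `φ i` of `l` (the function `φ`
enumerates the edge-ends at `l`, with multiplicity). -/
def Multigraph.leafExpand (G : Multigraph V) (r : ℕ) (l : V) (φ : Fin r → V)
    (hφ : ∀ i, φ i ≠ l) : Multigraph ({x : V // x ≠ l} ⊕ Fin r) where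
  mult := Sym2.lift ⟨fun a b =>
    match a, b with
    | Sum.inl a, Sum.inl b => G.mult s(a.1, b.1)
    | Sum.inl a, Sum.inr i => if φ i = a.1 then 1 else 0
    | Sum.inr i, Sum.inl a => if φ i = a.1 then 1 else 0
    | Sum.inr i, Sum.inr j => if i = j then 0 else 1,
    by
      intro a b
      rcases a with a | i <;> rcases b with b | j <;> simp only []
      · rw [Sym2.eq_swap]
      · simp [eq_comm]⟩
  loopless w := by
    rcases w with a | i <;> simp [G.loopless]

/-!
Every vertex of `K` lies in `S'`, so the vertices outside `S'` are exactly those outside `S`,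
joined in `G'` exactly as in `G`; hence the two reductions coincide. The cut `∂_{G'}(S')`
consists of the edges of `∂_G(S)` not at `l`, together with the edges from `K` to the
outside, and `φ` matches the latter with the edges from `l` to the outside. Finally
`|S'| = |S| - 1 + r` is even because `|S|` is even and `r` is odd.
-/

namespace Multigraph

variable {G : Multigraph V} {r : ℕ} {l : V} {φ : Fin r → V} {hφl : ∀ i, φ i ≠ l} {S : Finset V}

def expandedSet (S : Finset V) (l : V) (r : ℕ) : Finset ({x : V // x ≠ l} ⊕ Fin r) :=
  ((S.erase l).subtype (· ≠ l)).disjSum univ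

section

omit [Fintype V]

@[simp]
theorem leafExpand_mult_inl_inl (a b : {x : V // x ≠ l}) :
    (G.leafExpand r l φ hφl).mult s(Sum.inl a, Sum.inl b) = G.mult s(a.1, b.1) :=
  rfl

@[simp]
theorem leafExpand_mult_inr_inl (i : Fin r) (b : {x : V // x ≠ l}) :
    (G.leafExpand r l φ hφl).mult s(Sum.inr i, Sum.inl b) = if φ i = b.1 then 1 else 0 :=
  rfl

@[simp]
theorem inl_mem_expandedSet {a : {x : V // x ≠ l}} :
    Sum.inl a ∈ expandedSet S l r ↔ a.1 ∈ S := by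
  simp [expandedSet, a.2]

@[simp]
theorem inr_mem_expandedSet (i : Fin r) : Sum.inr i ∈ expandedSet S l r := by
  simp [expandedSet]

theorem card_expandedSet (hlS : l ∈ S) : (expandedSet S l r).card = S.card - 1 + r := by
  rw [expandedSet, card_disjSum, card_subtype, filter_true_of_mem fun x hx => ne_of_mem_erase hx,
    card_erase_of_mem hlS, card_univ, Fintype.card_fin]

def complExpandedSetInl (hlS : l ∈ S) (x : {x : V // x ∉ S}) :
    {w : {x : V // x ≠ l} ⊕ Fin r // w ∉ expandedSet S l r} :=
  ⟨Sum.inl ⟨x.1, fun h => x.2 (h ▸ hlS)⟩, by simpa using x.2⟩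

theorem complExpandedSetInl_bijective (hlS : l ∈ S) :
    Function.Bijective (complExpandedSetInl (r := r) hlS) := by
  refine ⟨fun x y h => ?_, ?_⟩
  · simpa [complExpandedSetInl, Subtype.ext_iff] using h
  · rintro ⟨a | i, hw⟩
    · exact ⟨⟨a.1, by simpa using hw⟩, rfl⟩
    · exact absurd (inr_mem_expandedSet i) hw

noncomputable def complExpandedSetEquiv (hlS : l ∈ S) :
    {x : V // x ∉ S} ≃ {w : {x : V // x ≠ l} ⊕ Fin r // w ∉ expandedSet S l r} :=
  Equiv.ofBijective _ (complExpandedSetInl_bijective hlS)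

theorem reduce_leafExpand_mult_map_complExpandedSetEquiv (hlS : l ∈ S) {u v : V}
    (hu : u ≠ l) (hv : v ≠ l) (huv : u ≠ v)
    (huv' : (Sum.inl ⟨u, hu⟩ : {x : V // x ≠ l} ⊕ Fin r) ≠ Sum.inl ⟨v, hv⟩)
    (q : Sym2 {x : V // x ∉ S}) :
    ((G.leafExpand r l φ hφl).reduce (expandedSet S l r) huv').mult
        (q.map (complExpandedSetEquiv hlS)) = (G.reduce S huv).mult q := by
  induction q using Sym2.ind with
  | _ x y => simp [reduce, complExpandedSetEquiv, complExpandedSetInl, Subtype.ext_iff]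

end

theorem compl_expandedSet : (expandedSet S l r)ᶜ = (Sᶜ.subtype (· ≠ l)).disjSum ∅ := by
  ext (a | i) <;> simp

theorem cutsize_leafExpand_expandedSet
    (hφ : ∀ x : V, (univ.filter fun i => φ i = x).card = G.mult s(l, x)) (hlS : l ∈ S) :
    (G.leafExpand r l φ hφl).cutsize (expandedSet S l r) = G.cutsize S := by
  have hout : ∀ x, ∑ b ∈ Sᶜ.subtype (· ≠ l), G.mult s(x, b.1) = ∑ y ∈ Sᶜ, G.mult s(x, y) :=
    fun x => sum_subtype_of_mem (fun y => G.mult s(x, y)) fun y hy h => mem_compl.mp hy (h ▸ hlS)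
  have hK : ∀ y, ∑ i, (if φ i = y then 1 else 0) = G.mult s(l, y) := fun y => by
    rw [sum_boole, Nat.cast_id, hφ]
  rw [cutsize, compl_expandedSet, expandedSet, cutsize, ← sum_erase_add S _ hlS]
  simp only [sum_disjSum, sum_empty, add_zero, leafExpand_mult_inl_inl, leafExpand_mult_inr_inl,
    hout]
  rw [sum_subtype_of_mem (fun x => ∑ y ∈ Sᶜ, G.mult s(x, y)) fun x hx => ne_of_mem_erase hx,
    sum_comm (s := univ)]
  simp only [hK, hout]

end Multigraph

theorem leaf_expansion_two_cut_commute {V : Type} [Fintype V] [DecidableEq V]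
    (r : ℕ) (hodd : Odd r) (G : Multigraph V) (l : V)
    (φ : Fin r → V) (hφ : ∀ x : V, (Finset.univ.filter fun i => φ i = x).card = G.mult s(l, x))
    (hφl : ∀ i, φ i ≠ l)
    (S : Finset V) (hSeven : Even S.card) (hlS : l ∈ S) (hcut : G.cutsize S = 2)
    (u v : V) (huv : u ≠ v) (hu : u ∉ S) (hv : v ∉ S) :
    letI S' : Finset ({x : V // x ≠ l} ⊕ Fin r) :=
      ((S.erase l).subtype (· ≠ l)).disjSum Finset.univ
    Even S'.card ∧ (G.leafExpand r l φ hφl).cutsize S' = 2 ∧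
      ∃ e : {w : {x : V // x ≠ l} ⊕ Fin r // w ∉ S'} ≃ {x : V // x ∉ S},
        ∀ p, ((G.leafExpand r l φ hφl).reduce S'
            (u := Sum.inl ⟨u, fun h => hu (h ▸ hlS)⟩)
            (v := Sum.inl ⟨v, fun h => hv (h ▸ hlS)⟩)
            (by simp [huv])).mult p =
          (G.reduce S huv).mult (p.map e) := by
  refine ⟨?_, ?_, (complExpandedSetEquiv hlS).symm,
    fun (p : Sym2 {w // w ∉ expandedSet S l r}) => ?_⟩
  · show Even (expandedSet S l r).card
    rw [card_expandedSet hlS]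
    exact (Nat.Even.sub_odd (card_pos.mpr ⟨l, hlS⟩) hSeven odd_one).add_odd hodd
  · exact (cutsize_leafExpand_expandedSet hφ hlS).trans hcut
  · have hred := reduce_leafExpand_mult_map_complExpandedSetEquiv (G := G) (hφl := hφl) hlS
      (ne_of_mem_of_not_mem hlS hu).symm (ne_of_mem_of_not_mem hlS hv).symm huv (by simp [huv])
      (p.map (complExpandedSetEquiv hlS).symm)
    rwa [Sym2.map_map, Equiv.self_comp_symm, Sym2.map_id] at hred
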